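/- arXiv:2007.11217 — 4 statements merged into one kernel-verified Lean document; each statement's English description precedes it below -/
import Mathlib

section
/- Let f be a holomorphic function on the open unit disk 𝔻 with |f(λ)| ≤ 1 for all λ ∈ 𝔻. Then the kernel K(λ, z) = (1 − conj(f(λ))·f(z))² / (1 − conj(λ)·z)² is positive semi-definite on 𝔻. -/
/-!
The kernel is the entrywise square of the Pick kernel `(1 - conj (f λ) f z) / (1 - conj λ z)`,
so by the Schur product theorem it suffices that every Pick matrix of `f` is positive
semidefinite.

For that, fix points `λᵢ`, coefficients `cᵢ` and a circle `|ζ| = r < 1` enclosing the points, and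
put `U = ∑ cⱼ (ζ - λⱼ)⁻¹`, `V = ∑ cⱼ f(λⱼ) (ζ - λⱼ)⁻¹`. Then `f U = V + G` with `G` holomorphic
(built from difference quotients of `f`), while on the circle `conj V` extends holomorphically to
the disc and vanishes at `0`; so `V ⟂ G` in `L²` of the circle and `‖V‖² ≤ ‖f U‖² ≤ ‖U‖²`. Since
the circle average of `conj (ζ - λ)⁻¹ (ζ - μ)⁻¹` is `(r² - conj λ μ)⁻¹`, this is the positivity of
the Pick form with `r²` in place of `1`; let `r → 1`.
-/

open Complex Metric ComplexOrder

/-- A kernel `K` on the open unit disk is positive semi-definite if for every finite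
family of points in the disk and complex coefficients, the associated quadratic form
is a nonnegative real number (using the partial order on `ℂ`). -/
def IsPSDKernelOnDisk (K : ℂ → ℂ → ℂ) : Prop :=
  ∀ (n : ℕ) (lam : Fin n → ℂ), (∀ i, ‖lam i‖ < 1) →
    ∀ c : Fin n → ℂ,
      0 ≤ ∑ i, ∑ j, (starRingEnd ℂ) (c i) * c j * K (lam i) (lam j)

open Real Filter Topology ComplexConjugate Matrix

theorem circleAverage_nonneg_of_sphere_nonneg {E : Type*} [NormedAddCommGroup E]
    [NormedSpace ℝ E] [PartialOrder E] [IsOrderedAddMonoid E] [IsOrderedModule ℝ E]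
    [ClosedIciTopology E] {f : ℂ → E} {c : ℂ} {R : ℝ} (hf : ∀ z ∈ sphere c |R|, 0 ≤ f z) :
    0 ≤ circleAverage f c R := by
  rw [circleAverage_def, intervalIntegral.integral_of_le two_pi_pos.le]
  exact smul_nonneg (by positivity)
    (MeasureTheory.integral_nonneg fun θ => hf _ (circleMap_mem_sphere' c R θ))

section CauchyKernel

variable {r : ℝ} {lam mu : ℂ}

theorem conj_inv_sub_eq_of_mem_sphere (hr : r ≠ 0) {ζ : ℂ} (hζ : ζ ∈ sphere (0 : ℂ) r) :
    conj (ζ - lam)⁻¹ = ζ * ((r : ℂ) ^ 2 - conj lam * ζ)⁻¹ := by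
  have hζ0 : ζ ≠ 0 := ne_of_mem_sphere hζ hr
  have hr2 : (r : ℂ) ^ 2 = conj ζ * ζ := by
    rw [conj_mul', (mem_sphere_zero_iff_norm.mp hζ)]
  rw [hr2, ← sub_mul, ← map_sub, mul_inv, ← mul_assoc, mul_comm ζ, mul_assoc,
    mul_inv_cancel₀ hζ0, mul_one, map_inv₀]

theorem sq_sub_conj_mul_ne_zero (hlam : ‖lam‖ < r) {ζ : ℂ} (hζ : ‖ζ‖ ≤ r) :
    (r : ℂ) ^ 2 - conj lam * ζ ≠ 0 := by
  rw [sub_ne_zero]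
  intro h
  have := congrArg norm h
  rw [norm_mul, norm_conj, norm_pow, norm_real, Real.norm_eq_abs, sq_abs] at this
  nlinarith [norm_nonneg lam, norm_nonneg ζ]

theorem differentiableOn_inv_sq_sub_conj_mul (hlam : ‖lam‖ < r) :
    DifferentiableOn ℂ (fun ζ => ((r : ℂ) ^ 2 - conj lam * ζ)⁻¹) (closedBall 0 r) :=
  ((differentiableOn_const _).sub ((differentiableOn_const _).mul differentiableOn_id)).inv
    fun _ hζ => sq_sub_conj_mul_ne_zero hlam (mem_closedBall_zero_iff.mp hζ)

theorem continuousOn_inv_sub_of_norm_lt (hlam : ‖lam‖ < r) :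
    ContinuousOn (fun ζ => (ζ - lam)⁻¹) (sphere 0 r) :=
  ContinuousOn.inv₀ (by fun_prop) fun ζ hζ h => (hlam.trans_eq
    (mem_sphere_zero_iff_norm.mp hζ).symm).ne (by rw [sub_eq_zero.mp h])

theorem circleAverage_conj_inv_sub_mul_inv_sub (hr : 0 < r) (hlam : ‖lam‖ < r)
    (hmu : ‖mu‖ < r) :
    circleAverage (fun ζ => conj (ζ - lam)⁻¹ * (ζ - mu)⁻¹) 0 r
      = ((r : ℂ) ^ 2 - conj lam * mu)⁻¹ := by
  have hF : DiffContOnCl ℂ (fun ζ => ((r : ℂ) ^ 2 - conj lam * ζ)⁻¹) (ball 0 |r|) := by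
    rw [abs_of_pos hr]
    exact (differentiableOn_inv_sq_sub_conj_mul hlam).diffContOnCl_ball subset_rfl
  rw [← hF.circleAverage_smul_div (w := mu) (by rwa [abs_of_pos hr, mem_ball_zero_iff])]
  refine circleAverage_congr_sphere fun ζ hζ => ?_
  rw [abs_of_pos hr] at hζ
  simp only [conj_inv_sub_eq_of_mem_sphere hr.ne' hζ, sub_zero, smul_eq_mul]
  ring

end CauchyKernel

section CauchySums

variable {ι : Type*} [Fintype ι] {r : ℝ} {lam : ι → ℂ}

theorem continuousOn_sum_mul_inv_sub (hlam : ∀ i, ‖lam i‖ < r) (a : ι → ℂ) :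
    ContinuousOn (fun ζ => ∑ i, a i * (ζ - lam i)⁻¹) (sphere 0 r) :=
  continuousOn_finsetSum _ fun i _ =>
    continuousOn_const.mul (continuousOn_inv_sub_of_norm_lt (hlam i))

theorem circleAverage_conj_sum_mul_sum (hr : 0 < r) (hlam : ∀ i, ‖lam i‖ < r)
    (a b : ι → ℂ) :
    circleAverage (fun ζ => conj (∑ i, a i * (ζ - lam i)⁻¹) * ∑ j, b j * (ζ - lam j)⁻¹) 0 r
      = ∑ i, ∑ j, conj (a i) * b j * ((r : ℂ) ^ 2 - conj (lam i) * lam j)⁻¹ := by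
  have hcont : ∀ i j, ContinuousOn
      (fun ζ => conj (a i) * b j * (conj (ζ - lam i)⁻¹ * (ζ - lam j)⁻¹)) (sphere 0 r) :=
    fun i j => continuousOn_const.mul <|
      (continuous_conj.comp_continuousOn (continuousOn_inv_sub_of_norm_lt (hlam i))).mul
        (continuousOn_inv_sub_of_norm_lt (hlam j))
  have hexpand : ∀ ζ, conj (∑ i, a i * (ζ - lam i)⁻¹) * ∑ j, b j * (ζ - lam j)⁻¹
      = ∑ i, ∑ j, conj (a i) * b j * (conj (ζ - lam i)⁻¹ * (ζ - lam j)⁻¹) := fun ζ => by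
    simp only [map_sum, map_mul, Finset.sum_mul_sum]
    exact Finset.sum_congr rfl fun i _ => Finset.sum_congr rfl fun j _ => by ring
  simp_rw [hexpand]
  rw [circleAverage_fun_sum fun i _ =>
    (continuousOn_finsetSum _ fun j _ => hcont i j).circleIntegrable hr.le]
  refine Finset.sum_congr rfl fun i _ => ?_
  rw [circleAverage_fun_sum fun j _ => (hcont i j).circleIntegrable hr.le]
  refine Finset.sum_congr rfl fun j _ => ?_
  simp_rw [← smul_eq_mul (conj (a i) * b j), circleAverage_fun_smul,
    circleAverage_conj_inv_sub_mul_inv_sub hr (hlam i) (hlam j)]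

theorem circleAverage_conj_sum_mul_eq_zero (hr : 0 < r) (hlam : ∀ i, ‖lam i‖ < r)
    (a : ι → ℂ) {g : ℂ → ℂ} (hg : DifferentiableOn ℂ g (closedBall 0 r)) :
    circleAverage (fun ζ => conj (∑ i, a i * (ζ - lam i)⁻¹) * g ζ) 0 r = 0 := by
  set H : ℂ → ℂ := fun ζ =>
    (∑ i, conj (a i) * (ζ * ((r : ℂ) ^ 2 - conj (lam i) * ζ)⁻¹)) * g ζ
  have hH : DiffContOnCl ℂ H (ball 0 |r|) := by
    rw [abs_of_pos hr]
    refine DifferentiableOn.diffContOnCl_ball ?_ subset_rfl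
    exact (DifferentiableOn.fun_sum fun i _ => (differentiableOn_const _).mul
      (differentiableOn_id.mul (differentiableOn_inv_sq_sub_conj_mul (hlam i)))).mul hg
  calc _ = circleAverage H 0 r := circleAverage_congr_sphere fun ζ hζ => by
          rw [abs_of_pos hr] at hζ
          simp only [H, map_sum, map_mul, conj_inv_sub_eq_of_mem_sphere hr.ne' hζ]
    _ = H 0 := hH.circleAverage
    _ = 0 := by simp [H]

theorem pick_form_nonneg_of_closedBall (hr : 0 < r) {f : ℂ → ℂ}
    (hf : DifferentiableOn ℂ f (closedBall 0 r)) (hf1 : ∀ ζ ∈ sphere (0 : ℂ) r, ‖f ζ‖ ≤ 1)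
    (hlam : ∀ i, ‖lam i‖ < r) (c : ι → ℂ) :
    0 ≤ ∑ i, ∑ j, conj (c i) * c j *
      ((1 - conj (f (lam i)) * f (lam j)) / ((r : ℂ) ^ 2 - conj (lam i) * lam j)) := by
  set U : ℂ → ℂ := fun ζ => ∑ j, c j * (ζ - lam j)⁻¹
  set V : ℂ → ℂ := fun ζ => ∑ j, (c j * f (lam j)) * (ζ - lam j)⁻¹
  set G : ℂ → ℂ := fun ζ => ∑ j, c j * dslope f (lam j) ζ
  have hG : DifferentiableOn ℂ G (closedBall 0 r) :=
    DifferentiableOn.fun_sum fun j _ => (differentiableOn_const _).mul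
      ((differentiableOn_dslope
        (closedBall_mem_nhds_of_mem (mem_ball_zero_iff.2 (hlam j)))).2 hf)
  have hfU : ∀ ζ ∈ sphere (0 : ℂ) r, f ζ * U ζ = V ζ + G ζ := by
    intro ζ hζ
    simp only [U, V, G, Finset.mul_sum, ← Finset.sum_add_distrib]
    refine Finset.sum_congr rfl fun j _ => ?_
    have hne : ζ - lam j ≠ 0 := fun h => (hlam j).ne (by
      rw [← sub_eq_zero.mp h, mem_sphere_zero_iff_norm.mp hζ])
    rw [dslope_of_ne f (sub_ne_zero.mp hne), slope_def_field]
    field_simp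
    ring
  have hUc : ContinuousOn U (sphere 0 r) := continuousOn_sum_mul_inv_sub hlam c
  have hVc : ContinuousOn V (sphere 0 r) := continuousOn_sum_mul_inv_sub hlam _
  have hGc : ContinuousOn G (sphere 0 r) := hG.continuousOn.mono sphere_subset_closedBall
  have hVG : circleAverage (fun ζ => conj (V ζ) * G ζ) 0 r = 0 :=
    circleAverage_conj_sum_mul_eq_zero hr hlam _ hG
  have hGV : circleAverage (fun ζ => conj (G ζ) * V ζ) 0 r = 0 := by
    have hVGi : CircleIntegrable (fun ζ => conj (V ζ) * G ζ) 0 r :=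
      ContinuousOn.circleIntegrable hr.le (by fun_prop)
    have h := (conjCLE : ℂ →L[ℝ] ℂ).circleAverage_comp_comm hVGi
    rw [hVG, map_zero] at h
    simpa [Function.comp_def, mul_comm] using h
  calc (0 : ℂ)
      ≤ circleAverage
          (fun ζ => (1 - conj (f ζ) * f ζ) * (conj (U ζ) * U ζ) + conj (G ζ) * G ζ) 0 r := by
        refine circleAverage_nonneg_of_sphere_nonneg fun ζ hζ => ?_
        rw [abs_of_pos hr] at hζ
        have hf1' : 0 ≤ 1 - ‖f ζ‖ ^ 2 :=
          sub_nonneg.2 (pow_le_one₀ (norm_nonneg _) (hf1 ζ hζ))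
        simp only [conj_mul']
        exact_mod_cast add_nonneg (mul_nonneg hf1' (sq_nonneg _)) (sq_nonneg _)
    _ = circleAverage (fun ζ => conj (U ζ) * U ζ - conj (V ζ) * V ζ - conj (V ζ) * G ζ
          - conj (G ζ) * V ζ) 0 r := by
        refine circleAverage_congr_sphere fun ζ hζ => ?_
        rw [abs_of_pos hr] at hζ
        have h := hfU ζ hζ
        have hc := congrArg conj h
        rw [map_mul, map_add] at hc
        linear_combination (-(conj (f ζ) * conj (U ζ))) * h - (V ζ + G ζ) * hc
    _ = circleAverage (fun ζ => conj (U ζ) * U ζ) 0 r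
          - circleAverage (fun ζ => conj (V ζ) * V ζ) 0 r
          - circleAverage (fun ζ => conj (V ζ) * G ζ) 0 r
          - circleAverage (fun ζ => conj (G ζ) * V ζ) 0 r := by
        rw [← circleAverage_fun_sub, ← circleAverage_fun_sub, ← circleAverage_fun_sub]
        all_goals exact ContinuousOn.circleIntegrable hr.le (by fun_prop)
    _ = _ := by
        rw [hVG, hGV, sub_zero, sub_zero, circleAverage_conj_sum_mul_sum hr hlam,
          circleAverage_conj_sum_mul_sum hr hlam, ← Finset.sum_sub_distrib]
        refine Finset.sum_congr rfl fun i _ => ?_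
        rw [← Finset.sum_sub_distrib]
        refine Finset.sum_congr rfl fun j _ => ?_
        rw [map_mul]
        ring

end CauchySums

theorem pick_form_nonneg {ι : Type*} [Fintype ι] {f : ℂ → ℂ}
    (hf : DifferentiableOn ℂ f (ball 0 1)) (hle : ∀ z ∈ ball (0 : ℂ) 1, ‖f z‖ ≤ 1)
    {lam : ι → ℂ} (hlam : ∀ i, ‖lam i‖ < 1) (c : ι → ℂ) :
    0 ≤ ∑ i, ∑ j, conj (c i) * c j *
      ((1 - conj (f (lam i)) * f (lam j)) / (1 - conj (lam i) * lam j)) := by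
  set q : ℝ → ℂ := fun r => ∑ i, ∑ j, conj (c i) * c j *
    ((1 - conj (f (lam i)) * f (lam j)) / ((r : ℂ) ^ 2 - conj (lam i) * lam j))
  have hq : Tendsto q (𝓝 1) (𝓝 (q 1)) := by
    refine tendsto_finsetSum _ fun i _ => tendsto_finsetSum _ fun j _ => ?_
    refine (continuousAt_const.mul (continuousAt_const.div (by fun_prop) ?_)).tendsto
    exact sq_sub_conj_mul_ne_zero (by simpa using hlam i) (by simpa using (hlam j).le)
  have hev : ∀ᶠ r in 𝓝[<] (1 : ℝ), 0 ≤ q r := by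
    filter_upwards [Ioo_mem_nhdsLT one_pos,
      Filter.eventually_all.2 fun i => Ioo_mem_nhdsLT (hlam i)] with r hr hlamr
    exact pick_form_nonneg_of_closedBall hr.1 (hf.mono (closedBall_subset_ball hr.2))
      (fun ζ hζ => hle ζ (sphere_subset_ball hr.2 hζ)) (fun i => (hlamr i).1) c
  simpa [q] using ge_of_tendsto (hq.mono_left nhdsWithin_le_nhds) hev

theorem Matrix.star_dotProduct_mulVec_eq_sum {R ι : Type*} [CommSemiring R] [StarRing R]
    [Fintype ι] (M : Matrix ι ι R) (x : ι → R) :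
    star x ⬝ᵥ (M *ᵥ x) = ∑ i, ∑ j, star (x i) * x j * M i j := by
  simp only [dotProduct, mulVec, Pi.star_apply, Finset.mul_sum]
  exact Finset.sum_congr rfl fun i _ => Finset.sum_congr rfl fun j _ => by ring

noncomputable def pickMatrix {ι : Type*} (f : ℂ → ℂ) (lam : ι → ℂ) : Matrix ι ι ℂ :=
  Matrix.of fun i j => (1 - conj (f (lam i)) * f (lam j)) / (1 - conj (lam i) * lam j)

theorem pickMatrix_isHermitian {ι : Type*} (f : ℂ → ℂ) (lam : ι → ℂ) :
    (pickMatrix f lam).IsHermitian := by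
  ext i j
  simp [pickMatrix, Matrix.conjTranspose_apply, mul_comm]

theorem pickMatrix_posSemidef {ι : Type*} [Fintype ι] {f : ℂ → ℂ}
    (hf : DifferentiableOn ℂ f (ball 0 1)) (hle : ∀ z ∈ ball (0 : ℂ) 1, ‖f z‖ ≤ 1)
    {lam : ι → ℂ} (hlam : ∀ i, ‖lam i‖ < 1) : (pickMatrix f lam).PosSemidef :=
  .of_dotProduct_mulVec_nonneg (pickMatrix_isHermitian f lam) fun c => by
    rw [Matrix.star_dotProduct_mulVec_eq_sum]
    exact pick_form_nonneg hf hle hlam c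

/-- If `f` is holomorphic on the unit disk with `|f| ≤ 1`, then the kernel
`(1 - conj (f λ) * f z)² / (1 - conj λ * z)²` is positive semi-definite. -/
theorem psd_of_schur_class
    (f : ℂ → ℂ) (hf : DifferentiableOn ℂ f (ball (0 : ℂ) 1))
    (hle : ∀ lam ∈ ball (0 : ℂ) 1, ‖f lam‖ ≤ 1) :
    IsPSDKernelOnDisk (fun lam z =>
        (1 - (starRingEnd ℂ) (f lam) * f z) ^ 2 / (1 - (starRingEnd ℂ) lam * z) ^ 2) := by
  intro n lam hlam c
  have hP := pickMatrix_posSemidef hf hle hlam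
  have h := (hP.hadamard hP).dotProduct_mulVec_nonneg c
  rw [Matrix.star_dotProduct_mulVec_eq_sum] at h
  simpa [pickMatrix, ← sq, div_pow] using h
end

section
/- Let f be a bounded holomorphic function on the open unit disk 𝔻 with |f(λ)| > 1 for all λ ∈ 𝔻. Then the kernel K(λ, z) = (1 − conj(f(λ))·f(z))² / (1 − conj(λ)·z)² is positive semi-definite on 𝔻. -/
/-!
Let `g` be holomorphic on the closed disk with `|g| ≥ 1` there, fix points `μᵢ` and coefficients
`cᵢ`, let `kᵢ` be the Szegő kernel at `μᵢ`, and put `h = Σ c̄ᵢ kᵢ`, `u = Σ conj (cᵢ g(μᵢ)) kᵢ`,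
`w = h / g`. In the inner product of `L²` of the unit circle the Szegő kernel reproduces point
values, so the Pick form of `g` equals `‖u‖² - ‖h‖²` and `⟪u, w⟫ = ‖h‖²`. Hence the form is
`‖u - w‖² + (‖h‖² - ‖w‖²)`, which is nonnegative because `|w| ≤ |h|` on the circle. A function on
the open disk is reduced to this case by the dilations `f (r ·)`, `r → 1`. The kernel of the
theorem is the entrywise square of this Pick kernel, hence positive semi-definite by the Schur
product theorem.
-/

open Complex Metric ComplexOrder

open Real Filter Topology Matrix
open scoped ComplexConjugate

noncomputable def szegoKernel (w z : ℂ) : ℂ := (1 - conj w * z)⁻¹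

noncomputable def circleInner (u v : ℂ → ℂ) : ℂ := circleAverage (fun z => conj (u z) * v z) 0 1

lemma conj_szegoKernel_of_mem_sphere (w : ℂ) {z : ℂ} (hz : z ∈ sphere (0 : ℂ) 1) :
    conj (szegoKernel w z) = z / (z - w) := by
  have hz0 : z ≠ 0 := ne_zero_of_mem_unit_sphere ⟨z, hz⟩
  have hconj : conj z = z⁻¹ := by
    rw [inv_def, ← Complex.sq_norm, mem_sphere_zero_iff_norm.1 hz]; simp
  rw [szegoKernel, map_inv₀, map_sub, map_one, map_mul, conj_conj, hconj]
  field_simp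

lemma one_sub_conj_mul_ne_zero {w z : ℂ} (hw : ‖w‖ < 1) (hz : ‖z‖ ≤ 1) : 1 - conj w * z ≠ 0 := by
  refine sub_ne_zero.2 fun h => ?_
  have : ‖conj w * z‖ < 1 := by
    rw [norm_mul, Complex.norm_conj]
    nlinarith [norm_nonneg w, norm_nonneg z]
  rw [← h] at this
  simp at this

lemma differentiableOn_szegoKernel {w : ℂ} (hw : w ∈ ball (0 : ℂ) 1) :
    DifferentiableOn ℂ (szegoKernel w) (closedBall 0 1) :=
  DifferentiableOn.inv (by fun_prop) fun z hz =>
    one_sub_conj_mul_ne_zero (mem_ball_zero_iff.1 hw) (mem_closedBall_zero_iff.1 hz)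

lemma circleInner_szegoKernel_left {v : ℂ → ℂ} (hv : DiffContOnCl ℂ v (ball 0 1)) {w : ℂ}
    (hw : w ∈ ball (0 : ℂ) 1) : circleInner (szegoKernel w) v = v w := by
  rw [← abs_one] at hv hw
  rw [circleInner, ← hv.circleAverage_smul_div hw]
  refine circleAverage_congr_sphere fun z hz => ?_
  rw [abs_one] at hz
  simp [conj_szegoKernel_of_mem_sphere w hz]

lemma circleInner_conj_symm (u v : ℂ → ℂ) : conj (circleInner u v) = circleInner v u := by
  simp only [circleInner, circleAverage, Complex.real_smul, map_mul, Complex.conj_ofReal,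
    ← intervalIntegral.intervalIntegral_conj, conj_conj, mul_comm (conj (v _))]

lemma circleInner_self_eq_ofReal (v : ℂ → ℂ) :
    circleInner v v = (circleAverage (fun z => ‖v z‖ ^ 2) 0 1 : ℝ) := by
  simp only [circleInner, circleAverage, Complex.real_smul, smul_eq_mul, Complex.ofReal_mul,
    Complex.conj_mul', ← Complex.ofReal_pow, intervalIntegral.integral_ofReal]

lemma circleInner_self_nonneg (v : ℂ → ℂ) : 0 ≤ circleInner v v := by
  rw [circleInner_self_eq_ofReal, Complex.zero_le_real]
  exact circleAverage_nonneg_of_nonneg fun _ _ => sq_nonneg _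

lemma circleInner_self_le_self {u v : ℂ → ℂ} (hu : ContinuousOn u (sphere 0 1))
    (hv : ContinuousOn v (sphere 0 1)) (huv : ∀ z ∈ sphere (0 : ℂ) 1, ‖u z‖ ≤ ‖v z‖) :
    circleInner u u ≤ circleInner v v := by
  rw [circleInner_self_eq_ofReal, circleInner_self_eq_ofReal, Complex.real_le_real]
  refine circleAverage_mono (ContinuousOn.circleIntegrable zero_le_one (by fun_prop))
    (ContinuousOn.circleIntegrable zero_le_one (by fun_prop)) fun z hz => ?_
  rw [abs_one] at hz
  exact pow_le_pow_left₀ (norm_nonneg _) (huv z hz) 2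

lemma circleInner_sub_sub_self {u v : ℂ → ℂ} (hu : ContinuousOn u (sphere 0 1))
    (hv : ContinuousOn v (sphere 0 1)) :
    circleInner (u - v) (u - v) =
      circleInner u u - circleInner u v - circleInner v u + circleInner v v := by
  calc circleInner (u - v) (u - v)
      = circleAverage (fun z => (conj (u z) * u z - conj (u z) * v z) -
          (conj (v z) * u z - conj (v z) * v z)) 0 1 := by
        simp only [circleInner, Pi.sub_apply, map_sub]
        congr 1; ext z; ring
    _ = _ := by
        rw [circleAverage_fun_sub, circleAverage_fun_sub, circleAverage_fun_sub]
        · simp only [circleInner]; ring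
        all_goals exact ContinuousOn.circleIntegrable zero_le_one (by fun_prop)

lemma circleInner_self_le_of_circleInner_eq {h u w : ℂ → ℂ} (hh : ContinuousOn h (sphere 0 1))
    (hu : ContinuousOn u (sphere 0 1)) (hw : ContinuousOn w (sphere 0 1))
    (hwh : ∀ z ∈ sphere (0 : ℂ) 1, ‖w z‖ ≤ ‖h z‖) (huw : circleInner u w = circleInner h h) :
    circleInner h h ≤ circleInner u u := by
  have hwu : circleInner w u = circleInner h h := by
    rw [← circleInner_conj_symm, huw, circleInner_conj_symm]
  have hsplit : circleInner u u =
      circleInner h h + circleInner (u - w) (u - w) + (circleInner h h - circleInner w w) := by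
    rw [circleInner_sub_sub_self hu hw, huw, hwu]
    ring
  rw [hsplit, add_assoc, le_add_iff_nonneg_right]
  exact add_nonneg (circleInner_self_nonneg _) (sub_nonneg.2 (circleInner_self_le_self hw hh hwh))

lemma circleInner_sum_szegoKernel_left {ι : Type*} (s : Finset ι) (a μ : ι → ℂ)
    (hμ : ∀ i ∈ s, μ i ∈ ball (0 : ℂ) 1) {v : ℂ → ℂ} (hv : DiffContOnCl ℂ v (ball 0 1)) :
    circleInner (fun z => ∑ i ∈ s, a i * szegoKernel (μ i) z) v =
      ∑ i ∈ s, conj (a i) * v (μ i) := by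
  calc circleInner (fun z => ∑ i ∈ s, a i * szegoKernel (μ i) z) v
      = circleAverage (fun z => ∑ i ∈ s, conj (a i) • (conj (szegoKernel (μ i) z) * v z)) 0 1 := by
        simp only [circleInner, map_sum, map_mul, Finset.sum_mul, smul_eq_mul, mul_assoc]
    _ = ∑ i ∈ s, conj (a i) * circleInner (szegoKernel (μ i)) v := by
        rw [circleAverage_fun_sum fun i hi => ?_]
        · exact Finset.sum_congr rfl fun i _ => circleAverage_fun_smul
        have hk :=
          (differentiableOn_szegoKernel (hμ i hi)).continuousOn.mono sphere_subset_closedBall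
        have hv' := hv.continuousOn_ball.mono sphere_subset_closedBall
        exact ContinuousOn.circleIntegrable zero_le_one (by fun_prop)
    _ = ∑ i ∈ s, conj (a i) * v (μ i) :=
        Finset.sum_congr rfl fun i hi => by rw [circleInner_szegoKernel_left hv (hμ i hi)]

/-- The negative of the classical Pick kernel `(1 - conj (g x) * g y) / (1 - conj x * y)`; for
`|g| ≥ 1` it is the Pick kernel of the Schur function `1 / g`, scaled by `conj (g x) * g y`. -/
noncomputable def pickKernel (g : ℂ → ℂ) (x y : ℂ) : ℂ := (conj (g x) * g y - 1) * szegoKernel x y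

lemma diffContOnCl_sum_szegoKernel {ι : Type*} (s : Finset ι) (a μ : ι → ℂ)
    (hμ : ∀ i ∈ s, μ i ∈ ball (0 : ℂ) 1) :
    DiffContOnCl ℂ (fun z => ∑ i ∈ s, a i * szegoKernel (μ i) z) (ball 0 1) :=
  DifferentiableOn.diffContOnCl_ball (DifferentiableOn.fun_sum fun i hi =>
    (differentiableOn_szegoKernel (hμ i hi)).const_mul (a i)) subset_rfl

theorem isPSDKernelOnDisk_pickKernel_of_diffContOnCl {g : ℂ → ℂ} (hg : DiffContOnCl ℂ g (ball 0 1))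
    (hg1 : ∀ z ∈ closedBall (0 : ℂ) 1, 1 ≤ ‖g z‖) : IsPSDKernelOnDisk (pickKernel g) := by
  intro n μ hμ c
  replace hμ : ∀ i ∈ Finset.univ, μ i ∈ ball (0 : ℂ) 1 := fun i _ => mem_ball_zero_iff.2 (hμ i)
  have hg0 : ∀ z ∈ closedBall (0 : ℂ) 1, g z ≠ 0 := fun z hz =>
    norm_pos_iff.1 (zero_lt_one.trans_le (hg1 z hz))
  set h : ℂ → ℂ := fun z => ∑ i, conj (c i) * szegoKernel (μ i) z
  set u : ℂ → ℂ := fun z => ∑ i, conj (c i * g (μ i)) * szegoKernel (μ i) z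
  set w : ℂ → ℂ := fun z => h z / g z
  have hh : DiffContOnCl ℂ h (ball 0 1) := diffContOnCl_sum_szegoKernel _ _ μ hμ
  have hu : DiffContOnCl ℂ u (ball 0 1) := diffContOnCl_sum_szegoKernel _ _ μ hμ
  have hw : DiffContOnCl ℂ w (ball 0 1) := by
    refine hh.smul (hg.inv fun z hz => hg0 z ?_)
    rwa [closure_ball _ one_ne_zero] at hz
  have hhh : circleInner h h = ∑ i, c i * h (μ i) := by
    simpa using circleInner_sum_szegoKernel_left Finset.univ (fun i => conj (c i)) μ hμ hh
  have huu : circleInner u u = ∑ i, c i * g (μ i) * u (μ i) := by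
    simpa only [conj_conj] using circleInner_sum_szegoKernel_left Finset.univ
      (fun i => conj (c i * g (μ i))) μ hμ hu
  have huw : circleInner u w = circleInner h h := by
    rw [hhh, circleInner_sum_szegoKernel_left Finset.univ _ μ hμ hw]
    refine Finset.sum_congr rfl fun i _ => ?_
    have := hg0 (μ i) (ball_subset_closedBall (hμ i (Finset.mem_univ i)))
    simp only [conj_conj, w]
    field_simp
  have hform : ∑ i, ∑ j, conj (c i) * c j * pickKernel g (μ i) (μ j) =
      circleInner u u - circleInner h h := by
    rw [huu, hhh, ← Finset.sum_sub_distrib, Finset.sum_comm]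
    refine Finset.sum_congr rfl fun i _ => ?_
    simp only [h, u, pickKernel, Finset.mul_sum, ← Finset.sum_sub_distrib, map_mul]
    refine Finset.sum_congr rfl fun j _ => ?_
    ring
  rw [hform, sub_nonneg]
  refine circleInner_self_le_of_circleInner_eq (hh.continuousOn_ball.mono sphere_subset_closedBall)
    (hu.continuousOn_ball.mono sphere_subset_closedBall)
    (hw.continuousOn_ball.mono sphere_subset_closedBall) (fun z hz => ?_) huw
  rw [norm_div]
  exact div_le_self (norm_nonneg _) (hg1 z (sphere_subset_closedBall hz))

lemma mapsTo_ofReal_mul_closedBall_ball {r : ℝ} (hr0 : 0 ≤ r) (hr1 : r < 1) :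
    Set.MapsTo (fun z : ℂ => r * z) (closedBall 0 1) (ball 0 1) := fun z hz => by
  rw [mem_closedBall_zero_iff] at hz
  rw [mem_ball_zero_iff, norm_mul, Complex.norm_real, Real.norm_of_nonneg hr0]
  nlinarith [norm_nonneg z]

lemma continuousAt_szegoKernel_div {x y : ℂ} (hx : ‖x‖ < 1) (hy : ‖y‖ < 1) :
    ContinuousAt (fun r : ℝ => szegoKernel (x / r) (y / r)) 1 := by
  have := one_sub_conj_mul_ne_zero hx hy.le
  unfold szegoKernel
  fun_prop (disch := simp [this])

theorem isPSDKernelOnDisk_pickKernel {f : ℂ → ℂ} (hf : DifferentiableOn ℂ f (ball 0 1))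
    (hf1 : ∀ z ∈ ball (0 : ℂ) 1, 1 ≤ ‖f z‖) : IsPSDKernelOnDisk (pickKernel f) := by
  intro n lam hlam c
  set F : ℝ → ℂ := fun r => ∑ i, ∑ j, conj (c i) * c j *
    ((conj (f (lam i)) * f (lam j) - 1) * szegoKernel (lam i / r) (lam j / r))
  have hF : ContinuousAt F 1 := by
    have := fun i j => continuousAt_szegoKernel_div (hlam i) (hlam j)
    fun_prop
  have hF1 : F 1 = ∑ i, ∑ j, conj (c i) * c j * pickKernel f (lam i) (lam j) := by
    simp [F, pickKernel]
  have hnear : ∀ᶠ r : ℝ in 𝓝[<] 1, 0 < r ∧ ∀ i, ‖lam i‖ < r :=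
    nhdsWithin_le_nhds <| (eventually_gt_nhds one_pos).and <|
      eventually_all.2 fun i => eventually_gt_nhds (hlam i)
  rw [← hF1]
  refine ge_of_tendsto (hF.tendsto.mono_left (nhdsWithin_le_nhds (s := Set.Iio 1))) ?_
  filter_upwards [hnear, self_mem_nhdsWithin] with r ⟨hr0, hlam_r⟩ hr1
  have hmaps := mapsTo_ofReal_mul_closedBall_ball hr0.le hr1
  have hlam_div : ∀ i, ‖lam i / r‖ < 1 := fun i => by
    rw [norm_div, Complex.norm_real, Real.norm_of_nonneg hr0.le, div_lt_one hr0]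
    exact hlam_r i
  have hg := isPSDKernelOnDisk_pickKernel_of_diffContOnCl
    ((hf.comp (by fun_prop) hmaps).diffContOnCl_ball subset_rfl) (fun z hz => hf1 _ (hmaps hz))
    n (fun i => lam i / r) hlam_div c
  convert hg using 4 with i _ j _
  simp [pickKernel, mul_div_cancel₀ _ (Complex.ofReal_ne_zero.2 hr0.ne')]

lemma star_dotProduct_mulVec_eq_sum {n : ℕ} (A : Matrix (Fin n) (Fin n) ℂ) (x : Fin n → ℂ) :
    star x ⬝ᵥ A *ᵥ x = ∑ i, ∑ j, conj (x i) * x j * A i j := by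
  simp only [dotProduct, Matrix.mulVec, Finset.mul_sum, Pi.star_apply, RCLike.star_def]
  exact Finset.sum_congr rfl fun i _ => Finset.sum_congr rfl fun j _ => by ring

lemma IsPSDKernelOnDisk.posSemidef {K : ℂ → ℂ → ℂ} (hK : IsPSDKernelOnDisk K)
    (hK' : ∀ x y, conj (K x y) = K y x) {n : ℕ} {lam : Fin n → ℂ} (hlam : ∀ i, ‖lam i‖ < 1) :
    (Matrix.of fun i j => K (lam i) (lam j)).PosSemidef := by
  refine Matrix.posSemidef_iff_dotProduct_mulVec.2 ⟨?_, fun x => ?_⟩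
  · ext i j
    simp [hK']
  · rw [star_dotProduct_mulVec_eq_sum]
    exact hK n lam hlam x

theorem IsPSDKernelOnDisk.mul {K L : ℂ → ℂ → ℂ} (hK : IsPSDKernelOnDisk K)
    (hL : IsPSDKernelOnDisk L) (hK' : ∀ x y, conj (K x y) = K y x)
    (hL' : ∀ x y, conj (L x y) = L y x) : IsPSDKernelOnDisk fun x y => K x y * L x y := by
  intro n lam hlam c
  have := ((hK.posSemidef hK' hlam).hadamard (hL.posSemidef hL' hlam)).dotProduct_mulVec_nonneg c
  rwa [star_dotProduct_mulVec_eq_sum] at this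

lemma conj_pickKernel (g : ℂ → ℂ) (x y : ℂ) : conj (pickKernel g x y) = pickKernel g y x := by
  simp only [pickKernel, szegoKernel, map_mul, map_sub, map_inv₀, map_one, conj_conj]
  ring

theorem psd_of_inverse_schur_class_general
    (f : ℂ → ℂ) (hf : DifferentiableOn ℂ f (ball (0 : ℂ) 1))
    (hgt : ∀ lam ∈ ball (0 : ℂ) 1, 1 < ‖f lam‖) :
    IsPSDKernelOnDisk (fun lam z =>
        (1 - (starRingEnd ℂ) (f lam) * f z) ^ 2 / (1 - (starRingEnd ℂ) lam * z) ^ 2) := by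
  have hpick := isPSDKernelOnDisk_pickKernel hf fun z hz => (hgt z hz).le
  convert hpick.mul hpick (conj_pickKernel f) (conj_pickKernel f) using 3 with x y
  simp only [pickKernel, szegoKernel, div_eq_mul_inv, ← inv_pow]
  ring

/-- If `f` is bounded holomorphic on the unit disk with `|f| > 1`, then the kernel
`(1 - conj (f λ) * f z)² / (1 - conj λ * z)²` is positive semi-definite. -/
theorem psd_of_inverse_schur_class
    (f : ℂ → ℂ) (hf : DifferentiableOn ℂ f (ball (0 : ℂ) 1))
    (hb : ∃ M : ℝ, ∀ z ∈ ball (0 : ℂ) 1, ‖f z‖ ≤ M)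
    (hgt : ∀ lam ∈ ball (0 : ℂ) 1, 1 < ‖f lam‖) :
    IsPSDKernelOnDisk (fun lam z =>
        (1 - (starRingEnd ℂ) (f lam) * f z) ^ 2 / (1 - (starRingEnd ℂ) lam * z) ^ 2) :=
  psd_of_inverse_schur_class_general f hf hgt
end

section
/- Let f be a bounded holomorphic function on the open unit disk 𝔻 such that the kernel K(λ, z) = (1 − conj(f(λ))·f(z))² / (1 − conj(λ)·z)² is positive semi-definite on 𝔻. If there exists a point λ₀ ∈ 𝔻 with |f(λ₀)| = 1, then f is a constant (unimodular) function on 𝔻. -/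
open Complex Metric ComplexOrder

/-! Since `|f(λ₀)| = 1`, the diagonal entry `K(λ₀, λ₀)` vanishes. In a positive semi-definite
kernel this forces `K(λ₀, z) = 0` for every `z`: otherwise the quadratic form at the two points
`λ₀, z` would be affine and nonconstant along a real line of coefficients, hence negative
somewhere. So `conj (f λ₀) * f z = 1`, i.e. `f z = f λ₀`. -/

lemma Complex.eq_zero_of_forall_nonneg_ofReal_mul_add {P D : ℂ}
    (h : ∀ t : ℝ, 0 ≤ (t : ℂ) * P + D) : P = 0 := by
  have hre : ∀ t : ℝ, 0 ≤ t * P.re + D.re := fun t => by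
    simpa using (Complex.le_def.mp (h t)).1
  have him : ∀ t : ℝ, t * P.im + D.im = 0 := fun t => by
    simpa using ((Complex.le_def.mp (h t)).2).symm
  have hPim : P.im = 0 := by linarith [him 0, him 1]
  have hPre : P.re = 0 := by
    by_contra hne
    have := hre (-(D.re + 1) / P.re)
    rw [div_mul_cancel₀ _ hne] at this
    linarith
  exact Complex.ext hPre hPim

namespace IsPSDKernelOnDisk

variable {K : ℂ → ℂ → ℂ}

lemma nonneg_two_point (hK : IsPSDKernelOnDisk K) {a z : ℂ} (ha : ‖a‖ < 1) (hz : ‖z‖ < 1)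
    (c : ℂ) :
    0 ≤ (starRingEnd ℂ) c * c * K a a + (starRingEnd ℂ) c * K a z + c * K z a + K z z := by
  have hpts : ∀ i, ‖![a, z] i‖ < 1 := Fin.forall_fin_two.mpr ⟨ha, hz⟩
  simpa [Fin.sum_univ_two, add_assoc] using hK 2 ![a, z] hpts ![c, 1]

lemma apply_eq_zero_of_apply_self_eq_zero (hK : IsPSDKernelOnDisk K) {a z : ℂ}
    (ha : ‖a‖ < 1) (hz : ‖z‖ < 1) (haa : K a a = 0) : K a z = 0 := by
  have hsum : K a z + K z a = 0 :=
    Complex.eq_zero_of_forall_nonneg_ofReal_mul_add (D := K z z) fun t => by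
      convert hK.nonneg_two_point ha hz t using 1
      simp only [haa, conj_ofReal]
      ring
  have hdiff : I * (K z a - K a z) = 0 :=
    Complex.eq_zero_of_forall_nonneg_ofReal_mul_add (D := K z z) fun t => by
      convert hK.nonneg_two_point ha hz (t * I) using 1
      simp only [haa, map_mul, conj_ofReal, conj_I]
      ring
  have hswap : K z a = K a z := sub_eq_zero.mp ((mul_eq_zero.mp hdiff).resolve_left I_ne_zero)
  linear_combination hsum / 2 - hswap / 2

end IsPSDKernelOnDisk

lemma one_sub_conj_mul_ne_zero_s3 {a z : ℂ} (ha : ‖a‖ < 1) (hz : ‖z‖ ≤ 1) :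
    1 - (starRingEnd ℂ) a * z ≠ 0 := by
  refine sub_ne_zero.mpr fun h => ?_
  have : ‖(starRingEnd ℂ) a * z‖ < 1 := by
    rw [norm_mul, norm_conj]
    nlinarith [norm_nonneg a, norm_nonneg z]
  simp [← h] at this

theorem const_of_psd_of_unimodular_value_general
    (f : ℂ → ℂ)
    (hpsd : IsPSDKernelOnDisk (fun lam z =>
        (1 - (starRingEnd ℂ) (f lam) * f z) ^ 2 / (1 - (starRingEnd ℂ) lam * z) ^ 2))
    (h1 : ∃ lam₀ ∈ ball (0 : ℂ) 1, ‖f lam₀‖ = 1) :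
    ∃ c : ℂ, ‖c‖ = 1 ∧ ∀ z ∈ ball (0 : ℂ) 1, f z = c := by
  obtain ⟨a, ha, hfa⟩ := h1
  rw [mem_ball_zero_iff] at ha
  have hunit : (starRingEnd ℂ) (f a) * f a = 1 := by rw [conj_mul', hfa]; norm_num
  refine ⟨f a, hfa, fun z hz => ?_⟩
  rw [mem_ball_zero_iff] at hz
  have hkernel := hpsd.apply_eq_zero_of_apply_self_eq_zero ha hz (by simp [hunit])
  have hnum : (1 - (starRingEnd ℂ) (f a) * f z) ^ 2 = 0 :=
    (div_eq_zero_iff.mp hkernel).resolve_right (pow_ne_zero 2 (one_sub_conj_mul_ne_zero_s3 ha hz.le))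
  linear_combination -f a * (pow_eq_zero_iff two_ne_zero).mp hnum - f z * hunit

/-- If the kernel `(1 - conj (f λ) * f z)² / (1 - conj λ * z)²` is positive
semi-definite and `|f(λ₀)| = 1` at some point of the disk, then `f` is a
unimodular constant on the disk. -/
theorem const_of_psd_of_unimodular_value
    (f : ℂ → ℂ) (hf : DifferentiableOn ℂ f (ball (0 : ℂ) 1))
    (hb : ∃ M : ℝ, ∀ z ∈ ball (0 : ℂ) 1, ‖f z‖ ≤ M)
    (hpsd : IsPSDKernelOnDisk (fun lam z =>
        (1 - (starRingEnd ℂ) (f lam) * f z) ^ 2 / (1 - (starRingEnd ℂ) lam * z) ^ 2))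
    (h1 : ∃ lam₀ ∈ ball (0 : ℂ) 1, ‖f lam₀‖ = 1) :
    ∃ c : ℂ, ‖c‖ = 1 ∧ ∀ z ∈ ball (0 : ℂ) 1, f z = c :=
  const_of_psd_of_unimodular_value_general f hpsd h1
end

section
/- Let r be a real number with 0 < r < 1. Then the kernel K(λ, z) = (1 − 2r²·conj(λ)·z + r⁴·conj(λ)²·z²) / (1 − conj(λ)·z) is positive semi-definite on the open unit disk 𝔻 if and only if r ≤ 1/√2. (This is the kernel form of the operator inequality I − 2·T_{rz}T_{rz}* + T_{r²z²}T_{r²z²}* ≥ 0 on the Hardy space H², for the function φ(z) = rz.) -/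
open Complex Metric ComplexOrder

/-- A rank-one quadratic form is nonnegative. -/
lemma rank_one_psd (n : ℕ) (d : Fin n → ℂ) :
    0 ≤ ∑ i, ∑ j, (starRingEnd ℂ) (d i) * d j := by
  have : ∑ i, ∑ j, (starRingEnd ℂ) (d i) * d j
      = (starRingEnd ℂ) (∑ i, d i) * (∑ j, d j) := by
    rw [map_sum, Finset.sum_mul_sum]
  rw [this]
  exact star_mul_self_nonneg _

/-- The Szegő kernel quadratic form is nonnegative. -/
lemma szego_psd (n : ℕ) (lam : Fin n → ℂ) (h : ∀ i, ‖lam i‖ < 1)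
    (c : Fin n → ℂ) :
    0 ≤ ∑ i, ∑ j, (starRingEnd ℂ) (c i) * c j * (1 - (starRingEnd ℂ) (lam i) * lam j)⁻¹ := by
  have hnorm : ∀ i j : Fin n, ‖(starRingEnd ℂ) (lam i) * lam j‖ < 1 := by
    intro i j
    rw [norm_mul, RCLike.norm_conj]
    have hi := h i; have hj := h j
    nlinarith [norm_nonneg (lam i), norm_nonneg (lam j)]
  have key : ∀ i j : Fin n, (starRingEnd ℂ) (c i) * c j * (1 - (starRingEnd ℂ) (lam i) * lam j)⁻¹
      = ∑' m : ℕ, (starRingEnd ℂ) (c i) * c j * ((starRingEnd ℂ) (lam i) * lam j) ^ m := by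
    intro i j
    rw [tsum_mul_left, tsum_geometric_of_norm_lt_one (hnorm i j)]
  simp only [key]
  rw [← Finset.sum_product']
  rw [← Summable.tsum_finsetSum (by
    intro p _
    exact (summable_geometric_of_norm_lt_one (hnorm p.1 p.2)).mul_left _)]
  apply tsum_nonneg
  intro m
  have : ∑ p : Fin n × Fin n,
        (starRingEnd ℂ) (c p.1) * c p.2 * ((starRingEnd ℂ) (lam p.1) * lam p.2) ^ m
      = (starRingEnd ℂ) (∑ i, c i * (lam i) ^ m) * (∑ j, c j * (lam j) ^ m) := by
    rw [map_sum, Finset.sum_mul_sum, ← Finset.sum_product']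
    apply Finset.sum_congr rfl
    intro p _
    simp only [mul_pow, map_mul, map_pow]
    ring
  rw [Finset.univ_product_univ, this]
  exact star_mul_self_nonneg _

lemma split_aux (a b u w : ℂ) (hu : 1 - u ≠ 0) :
    a * b * ((1 - 2 * w * u + w ^ 2 * u ^ 2) / (1 - u))
      = a * b + (1 - 2 * w) * (a * b * u) + (1 - w) ^ 2 * (a * b * u ^ 2 * (1 - u)⁻¹) := by
  field_simp
  ring

set_option maxHeartbeats 1600000 in
/-- For `0 < r < 1`, the kernel
`(1 − 2r² conj(λ) z + r⁴ conj(λ)² z²)/(1 − conj(λ) z)` is positive semi-definite on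
the unit disk iff `r ≤ 1/√2`. -/
theorem psd_kernel_rz_iff
    (r : ℝ) (hr0 : 0 < r) (hr1 : r < 1) :
    IsPSDKernelOnDisk (fun lam z =>
        (1 - 2 * (r : ℂ) ^ 2 * (starRingEnd ℂ) lam * z +
            (r : ℂ) ^ 4 * ((starRingEnd ℂ) lam) ^ 2 * z ^ 2) /
          (1 - (starRingEnd ℂ) lam * z)) ↔
      r ≤ 1 / Real.sqrt 2 := by
  have hsqrt2 : (0:ℝ) < Real.sqrt 2 := Real.sqrt_pos.mpr (by norm_num)
  have hsq2 : Real.sqrt 2 ^ 2 = 2 := Real.sq_sqrt (by norm_num)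
  constructor
  · -- PSD → r ≤ 1/√2
    intro h
    by_contra hc
    push_neg at hc
    have h2r : 1 < 2 * r ^ 2 := by
      have : 1 < r * Real.sqrt 2 := by
        rw [div_lt_iff₀ hsqrt2] at hc
        linarith
      nlinarith
    -- choose t
    set s : ℝ := min (1/2) ((2 * r ^ 2 - 1) / r ^ 4 / 2) with hs
    have hr4 : (0:ℝ) < r ^ 4 := by positivity
    have hspos : 0 < s := by
      apply lt_min (by norm_num)
      exact div_pos (div_pos (by linarith) hr4) (by norm_num)
    have hshalf : s ≤ 1/2 := min_le_left _ _
    have hseps : s < (2 * r ^ 2 - 1) / r ^ 4 := by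
      have h1 : s ≤ (2 * r ^ 2 - 1) / r ^ 4 / 2 := min_le_right _ _
      have h2 : (0:ℝ) < (2 * r ^ 2 - 1) / r ^ 4 := div_pos (by linarith) hr4
      linarith
    set t : ℝ := Real.sqrt s with ht
    have htpos : 0 < t := Real.sqrt_pos.mpr hspos
    have ht2 : t ^ 2 = s := Real.sq_sqrt hspos.le
    have ht1 : t < 1 := by nlinarith
    have htr2 : r ^ 2 * t ^ 2 < 1 := by nlinarith
    set k : ℝ := (1 - r ^ 2 * t ^ 2) ^ 2 / (1 - t ^ 2) with hk
    have hden : (0:ℝ) < 1 - t ^ 2 := by nlinarith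
    have hkpos : 0 < k := div_pos (pow_pos (by nlinarith) 2) hden
    have hklt1 : k < 1 := by
      rw [hk, div_lt_one hden]
      have : t ^ 2 * r ^ 4 < 2 * r ^ 2 - 1 := by
        have h3 := hseps
        rw [lt_div_iff₀ hr4] at h3
        nlinarith
      nlinarith
    have habs : ∀ i, ‖((![0, (t:ℂ)] : Fin 2 → ℂ) i)‖ < 1 := by
      intro i
      fin_cases i
      · simp
      · simpa [Complex.norm_real, Real.norm_eq_abs, abs_of_pos htpos] using ht1
    have h0 := h 2 ![0, (t:ℂ)] habs ![1, -(k:ℂ)⁻¹]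
    have hdenC : (1:ℂ) - (t:ℂ) * (t:ℂ) ≠ 0 := by
      intro hh
      have h4 : ((1 - t * t : ℝ):ℂ) = 0 := by push_cast; rw [hh]
      have h5 : (1 - t * t : ℝ) = 0 := by exact_mod_cast h4
      nlinarith
    have hkC : ((k:ℝ):ℂ) ≠ 0 := by
      simp only [ne_eq, Complex.ofReal_eq_zero]
      exact hkpos.ne'
    have hKtt : (1 - 2 * (r:ℂ)^2 * (t:ℂ) * (t:ℂ) + (r:ℂ)^4 * ((t:ℂ))^2 * ((t:ℂ))^2) /
        (1 - (t:ℂ)*(t:ℂ)) = ((k:ℝ):ℂ) := by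
      rw [hk]
      push_cast
      rw [div_eq_div_iff hdenC (by push_cast at hdenC ⊢; convert hdenC using 2; ring)]
      ring
    simp only [Fin.sum_univ_two, Matrix.cons_val_zero, Matrix.cons_val_one, Matrix.head_cons,
      map_zero, map_one, map_neg, map_inv₀, Complex.conj_ofReal, zero_mul, mul_zero,
      zero_pow, sub_zero, mul_one, one_mul, ne_eq, OfNat.ofNat_ne_zero, not_false_eq_true,
      add_zero, div_one] at h0
    rw [hKtt] at h0
    have hval : (1:ℂ) + -(↑k)⁻¹ + (-(↑k)⁻¹ + -(↑k)⁻¹ * -(↑k)⁻¹ * (↑k:ℂ))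
        = ((1 - k⁻¹ : ℝ):ℂ) := by
      push_cast
      field_simp
      ring
    have h6 : (0:ℂ) ≤ ((1 - k⁻¹ : ℝ):ℂ) := by
      rw [← hval]
      exact h0
    have h7 : (0:ℝ) ≤ 1 - k⁻¹ := Complex.zero_le_real.mp h6
    have h8 : k * k⁻¹ = 1 := mul_inv_cancel₀ hkpos.ne'
    nlinarith
  · -- r ≤ 1/√2 → PSD
    intro hr
    have h2r : 2 * r ^ 2 ≤ 1 := by
      have : r * Real.sqrt 2 ≤ 1 := by
        rw [div_eq_inv_mul, le_inv_mul_iff₀ hsqrt2] at hr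
        linarith [hr]
      nlinarith
    intro n lam hlam c
    have hnorm : ∀ i j : Fin n, ‖(starRingEnd ℂ) (lam i) * lam j‖ < 1 := by
      intro i j
      rw [norm_mul, RCLike.norm_conj]
      have hi := hlam i; have hj := hlam j
      nlinarith [norm_nonneg (lam i), norm_nonneg (lam j)]
    have hne : ∀ i j : Fin n, (1:ℂ) - (starRingEnd ℂ) (lam i) * lam j ≠ 0 := by
      intro i j hh
      have h1 : (starRingEnd ℂ) (lam i) * lam j = 1 := by
        have := sub_eq_zero.mp hh; exact this.symm
      have := hnorm i j
      rw [h1] at this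
      simp at this
    have split : ∀ i j : Fin n,
        (starRingEnd ℂ) (c i) * c j *
          ((1 - 2 * (r : ℂ) ^ 2 * (starRingEnd ℂ) (lam i) * lam j +
            (r : ℂ) ^ 4 * ((starRingEnd ℂ) (lam i)) ^ 2 * (lam j) ^ 2) /
            (1 - (starRingEnd ℂ) (lam i) * lam j))
        = (starRingEnd ℂ) (c i) * c j
          + (1 - 2 * (r : ℂ) ^ 2) * ((starRingEnd ℂ) (c i * lam i) * (c j * lam j))
          + (1 - (r : ℂ) ^ 2) ^ 2 *
            ((starRingEnd ℂ) (c i * (lam i) ^ 2) * (c j * (lam j) ^ 2) *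
              (1 - (starRingEnd ℂ) (lam i) * lam j)⁻¹) := by
      intro i j
      simp only [map_mul, map_pow]
      linear_combination split_aux ((starRingEnd ℂ) (c i)) (c j)
        ((starRingEnd ℂ) (lam i) * lam j) ((r:ℂ)^2) (hne i j)
    simp only [split]
    simp only [Finset.sum_add_distrib]
    apply add_nonneg
    apply add_nonneg
    · exact rank_one_psd n c
    · -- middle term
      have : ∑ i, ∑ j, (1 - 2 * (r : ℂ) ^ 2) *
            ((starRingEnd ℂ) (c i * lam i) * (c j * lam j))
          = (1 - 2 * (r : ℂ) ^ 2) *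
            ∑ i, ∑ j, (starRingEnd ℂ) (c i * lam i) * (c j * lam j) := by
        simp only [Finset.mul_sum]
      rw [this]
      apply mul_nonneg
      · have : (1 - 2 * (r : ℂ) ^ 2) = ((1 - 2 * r ^ 2 : ℝ) : ℂ) := by push_cast; ring
        rw [this]
        exact Complex.zero_le_real.mpr (by linarith)
      · exact rank_one_psd n (fun i => c i * lam i)
    · -- szego term
      have : ∑ i, ∑ j, (1 - (r : ℂ) ^ 2) ^ 2 *
            ((starRingEnd ℂ) (c i * (lam i) ^ 2) * (c j * (lam j) ^ 2) *
              (1 - (starRingEnd ℂ) (lam i) * lam j)⁻¹)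
          = (1 - (r : ℂ) ^ 2) ^ 2 *
            ∑ i, ∑ j, (starRingEnd ℂ) (c i * (lam i) ^ 2) * (c j * (lam j) ^ 2) *
              (1 - (starRingEnd ℂ) (lam i) * lam j)⁻¹ := by
        simp only [Finset.mul_sum]
      rw [this]
      apply mul_nonneg
      · have : ((1:ℂ) - (r : ℂ) ^ 2) ^ 2 = (((1 - r ^ 2 : ℝ))^2 : ℝ) := by push_cast; ring
        rw [this]
        exact Complex.zero_le_real.mpr (by positivity)
      · exact szego_psd n lam hlam (fun i => c i * (lam i) ^ 2)
end
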